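/- In the free group F(a,b) on two generators, for every n ≥ 1 the element g_n = a¹ b a² b ⋯ aⁿ b (the product of aᵏb for k = 1,…,n) is cyclically reduced and is not a proper power, i.e. if g_n = hᵐ for some h ∈ F(a,b) and m ≥ 1, then m = 1. -/

import Mathlib

/-- The word `g_n = a¹ b a² b ⋯ aⁿ b` in the free group on `a = of 0` and `b = of 1`. -/
def gword (n : ℕ) : FreeGroup (Fin 2) :=
  ((List.range n).map
    (fun k => (FreeGroup.of (0 : Fin 2)) ^ (k + 1) * FreeGroup.of (1 : Fin 2))).prod

/-- An element of a free group is cyclically reduced if its reduced word does not begin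
with a letter and end with the inverse of that letter. -/
def CyclicallyReduced {α : Type*} [DecidableEq α] (w : FreeGroup α) : Prop :=
  ∀ x : α × Bool, w.toWord.head? = some x → w.toWord.getLast? ≠ some (x.1, !x.2)

set_option linter.unusedSectionVars false
set_option maxHeartbeats 1000000
open List

section Aux

variable {α : Type*} [DecidableEq α] {β : Type*}

def Rl (x y : α × Bool) : Prop := ¬(x.1 = y.1 ∧ x.2 = !y.2)

def invL (x : α × Bool) : α × Bool := (x.1, !x.2)

lemma chain'_reduce (w : List (α × Bool)) : List.Chain' Rl (FreeGroup.reduce w) := by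
  induction w with
  | nil => exact List.isChain_nil
  | cons x t ih =>
    rw [FreeGroup.reduce.cons]
    rcases h : FreeGroup.reduce t with _ | ⟨hd, tl⟩
    · exact List.isChain_singleton x
    · rw [h] at ih
      by_cases hc : x.1 = hd.1 ∧ x.2 = !hd.2
      · simp only [hc, ↓reduceIte]; exact ih.tail
      · simp only [hc, ↓reduceIte]; exact List.isChain_cons_cons.2 ⟨hc, ih⟩

lemma reduce_eq_self_of_chain' {w : List (α × Bool)} (h : List.Chain' Rl w) :
    FreeGroup.reduce w = w := by
  induction w with
  | nil => rfl
  | cons x t ih =>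
    have ht := ih h.tail
    rw [FreeGroup.reduce.cons, ht]
    cases t with
    | nil => rfl
    | cons hd tl =>
      have hr : Rl x hd := (List.isChain_cons_cons.1 h).1
      simp only [if_neg hr]

lemma chain'_toWord (x : FreeGroup α) : List.Chain' Rl x.toWord := by
  have := chain'_reduce x.toWord
  rwa [FreeGroup.reduce_toWord] at this

lemma chain'_invRev {w : List (α × Bool)} (h : List.Chain' Rl w) :
    List.Chain' Rl (FreeGroup.invRev w) := by
  show List.IsChain _ _
  rw [FreeGroup.invRev, List.isChain_reverse, List.isChain_map]
  refine h.imp ?_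
  rintro a b hab ⟨h1, h2⟩
  exact hab ⟨h1.symm, by simpa using h2.symm⟩

lemma head?_invRev (w : List (α × Bool)) :
    (FreeGroup.invRev w).head? = w.getLast?.map invL := by
  rw [FreeGroup.invRev, List.head?_reverse, List.getLast?_map]
  rfl

lemma getLast?_invRev (w : List (α × Bool)) :
    (FreeGroup.invRev w).getLast? = w.head?.map invL := by
  rw [FreeGroup.invRev, List.getLast?_reverse, List.head?_map]
  rfl

lemma mk_cancel (L₁ L₂ : List (α × Bool)) (x : α × Bool) :
    FreeGroup.mk (L₁ ++ (x :: invL x :: L₂)) = FreeGroup.mk (L₁ ++ L₂) := by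
  apply FreeGroup.reduce.exact
  apply FreeGroup.reduce.Step.eq
  have := @FreeGroup.Red.Step.not α L₁ L₂ x.1 x.2
  simpa [invL] using this

lemma inv_mk_singleton (y : α × Bool) :
    (FreeGroup.mk [y])⁻¹ = FreeGroup.mk [invL y] := by
  rw [FreeGroup.inv_mk]
  rfl

def CRW (w : List (α × Bool)) : Prop :=
  List.Chain' Rl w ∧ ∀ x ∈ w.getLast?, ∀ y ∈ w.head?, Rl x y

def wpow (m : ℕ) (w : List β) : List β := (List.replicate m w).flatten

@[simp] lemma wpow_zero (w : List β) : wpow 0 w = [] := rfl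

lemma wpow_succ (m : ℕ) (w : List β) : wpow (m + 1) w = w ++ wpow m w := by
  simp [wpow, List.replicate_succ]

@[simp] lemma wpow_nil (m : ℕ) : wpow m ([] : List β) = [] := by
  induction m with
  | zero => rfl
  | succ m ih => rw [wpow_succ, ih]; rfl

@[simp] lemma length_wpow (m : ℕ) (w : List β) : (wpow m w).length = m * w.length := by
  induction m with
  | zero => simp
  | succ m ih => rw [wpow_succ]; simp [ih, Nat.succ_mul, Nat.add_comm]

lemma head?_wpow {m : ℕ} (hm : 1 ≤ m) (w : List β) : (wpow m w).head? = w.head? := by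
  obtain ⟨k, rfl⟩ := Nat.exists_eq_add_of_le hm
  rw [Nat.add_comm, wpow_succ]
  cases w with
  | nil => simp
  | cons a t => simp

lemma wpow_ne_nil {m : ℕ} (hm : 1 ≤ m) {w : List β} (hw : w ≠ []) : wpow m w ≠ [] := by
  intro h
  have := congrArg List.length h
  simp at this
  rcases this with h' | h'
  · omega
  · exact hw h'

lemma getLast?_wpow {m : ℕ} (hm : 1 ≤ m) (w : List β) : (wpow m w).getLast? = w.getLast? := by
  induction m with
  | zero => omega
  | succ m ih =>
    cases m with
    | zero => simp [wpow_succ]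
    | succ k =>
      rw [wpow_succ]
      cases hw : w with
      | nil => simp
      | cons a t =>
        rw [← hw, List.getLast?_append_of_ne_nil _ (wpow_ne_nil (by omega) (by simp [hw]))]
        exact ih (by omega)

lemma crw_wpow {w : List (α × Bool)} (h : CRW w) (m : ℕ) : CRW (wpow m w) := by
  have hch : ∀ k, List.Chain' Rl (wpow k w) := by
    intro k
    induction k with
    | zero => exact List.isChain_nil
    | succ k ih =>
      rw [wpow_succ]
      refine List.isChain_append.2 ⟨h.1, ih, ?_⟩
      intro x hx y hy
      cases k with
      | zero => simp at hy
      | succ k => rw [head?_wpow (by omega)] at hy; exact h.2 x hx y hy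
  refine ⟨hch m, ?_⟩
  intro x hx y hy
  cases m with
  | zero => simp at hx
  | succ m =>
    rw [getLast?_wpow (by omega)] at hx
    rw [head?_wpow (by omega)] at hy
    exact h.2 x hx y hy

lemma wpow_append_comm (m : ℕ) (u v : List β) :
    wpow m (u ++ v) ++ u = u ++ wpow m (v ++ u) := by
  induction m with
  | zero => simp
  | succ m ih =>
    rw [wpow_succ, wpow_succ]
    simp only [List.append_assoc]
    rw [ih]

lemma rotate_one_wpow (m : ℕ) (w : List β) : (wpow m w).rotate 1 = wpow m (w.rotate 1) := by
  cases m with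
  | zero => simp
  | succ m =>
    cases w with
    | nil => simp
    | cons h t =>
      have h1 : (h :: t).rotate 1 = t ++ [h] := by
        rw [List.rotate_cons_succ, List.rotate_zero]
      rw [h1, wpow_succ, List.cons_append, List.rotate_cons_succ, List.rotate_zero]
      have key : h :: ((t ++ wpow m (h :: t)) ++ [h]) = h :: wpow (m + 1) (t ++ [h]) := by
        calc h :: ((t ++ wpow m (h :: t)) ++ [h])
            = wpow (m + 1) ([h] ++ t) ++ [h] := by rw [wpow_succ]; simp
          _ = [h] ++ wpow (m + 1) (t ++ [h]) := wpow_append_comm (m + 1) [h] t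
          _ = h :: wpow (m + 1) (t ++ [h]) := by simp
      injection key with _ h4

lemma rotate_wpow (m : ℕ) (w : List β) (j : ℕ) :
    (wpow m w).rotate j = wpow m (w.rotate j) := by
  induction j with
  | zero => simp
  | succ j ih =>
    have h1 : ∀ (l : List β), l.rotate (j + 1) = (l.rotate j).rotate 1 := fun l => by
      rw [List.rotate_rotate]
    rw [h1, ih, h1 w, rotate_one_wpow]

lemma mem_gl_cons {x : β} {l : List β} (a : β) (h : x ∈ l.getLast?) :
    x ∈ (a :: l).getLast? := by
  cases l with
  | nil => simp at h
  | cons b t => rwa [List.getLast?_cons_cons]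

structure Shape (p w : List (α × Bool)) : Prop where
  chain_p : List.Chain' Rl p
  crw : CRW w
  wne : w ≠ []
  junL : ∀ x ∈ p.getLast?, ∀ y ∈ w.head?, Rl x y
  junR : ∀ x ∈ w.getLast?, ∀ z ∈ p.getLast?, Rl x (invL z)

lemma reduce_sandwich {p w : List (α × Bool)} (S : Shape p w) :
    FreeGroup.reduce (p ++ (w ++ FreeGroup.invRev p)) = p ++ (w ++ FreeGroup.invRev p) := by
  apply reduce_eq_self_of_chain'
  refine List.isChain_append.2 ⟨S.chain_p, List.isChain_append.2
    ⟨S.crw.1, chain'_invRev S.chain_p, ?_⟩, ?_⟩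
  · intro x hx y hy
    rw [head?_invRev] at hy
    obtain ⟨z, hz, rfl⟩ := Option.map_eq_some_iff.1 hy  -- hy : (getLast? p).map invL = some y
    exact S.junR x hx z hz
  · intro x hx y hy
    cases hw : w with
    | nil => exact absurd hw S.wne
    | cons a t =>
      rw [hw, List.cons_append, List.head?_cons] at hy
      have : y = a := by simpa using hy.symm
      subst this
      exact S.junL x hx y (by rw [hw]; simp)

lemma conj_assoc {G : Type*} [Group G] (a b c : G) :
    a * (b * c * b⁻¹) * a⁻¹ = (a * b) * c * (a * b)⁻¹ := by group

lemma rl_of_ne_pair {x y : α × Bool} (h : x ≠ (y.1, y.2)) : Rl x (invL y) := by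
  rintro ⟨h1, h2⟩
  apply h
  cases x; cases y
  simp [invL] at h1 h2 ⊢
  exact ⟨h1, by simpa using h2⟩

lemma conj_letter {p w : List (α × Bool)} (S : Shape p w) (y : α × Bool) :
    ∃ p' w', Shape p' w' ∧ w ~r w' ∧
      FreeGroup.mk [y] * (FreeGroup.mk p * FreeGroup.mk w * (FreeGroup.mk p)⁻¹) *
          (FreeGroup.mk [y])⁻¹
        = FreeGroup.mk p' * FreeGroup.mk w' * (FreeGroup.mk p')⁻¹ := by
  cases p with
  | cons hd tl =>
    by_cases hc : y.1 = hd.1 ∧ y.2 = !hd.2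
    · -- the letter cancels with the head of p
      have hhd : hd = invL y := by
        obtain ⟨h1, h2⟩ := hc
        have h3 : hd.2 = !y.2 := by rw [h2, Bool.not_not]
        cases hd; cases y
        simp_all [invL]
      refine ⟨tl, w, ?_, IsRotated.refl w, ?_⟩
      · exact { chain_p := S.chain_p.tail
                crw := S.crw
                wne := S.wne
                junL := fun x hx => S.junL x (mem_gl_cons hd hx)
                junR := fun x hx z hz => S.junR x hx z (mem_gl_cons hd hz) }
      · rw [conj_assoc]
        have hmk : FreeGroup.mk [y] * FreeGroup.mk (hd :: tl) = FreeGroup.mk tl := by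
          rw [FreeGroup.mul_mk]
          have := mk_cancel ([] : List (α × Bool)) tl y
          rw [hhd]
          simpa using this
        rw [hmk]
    · -- no cancellation; prepend the letter to p
      refine ⟨y :: hd :: tl, w, ?_, IsRotated.refl w, ?_⟩
      · refine { chain_p := List.isChain_cons_cons.2 ⟨hc, S.chain_p⟩
                 crw := S.crw
                 wne := S.wne
                 junL := ?_
                 junR := ?_ }
        · intro x hx
          rw [List.getLast?_cons_cons] at hx
          exact S.junL x hx
        · intro x hx z hz
          rw [List.getLast?_cons_cons] at hz
          exact S.junR x hx z hz
      · rw [conj_assoc, FreeGroup.mul_mk]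
        rfl
  | nil =>
    obtain ⟨a, t, rfl⟩ : ∃ a t, w = a :: t := by
      cases w with
      | nil => exact absurd rfl S.wne
      | cons a t => exact ⟨a, t, rfl⟩
    have base : FreeGroup.mk [y] * (FreeGroup.mk [] * FreeGroup.mk (a :: t) *
        (FreeGroup.mk ([] : List (α × Bool)))⁻¹) * (FreeGroup.mk [y])⁻¹
        = FreeGroup.mk [y] * FreeGroup.mk (a :: t) * (FreeGroup.mk [y])⁻¹ := by
      rw [← FreeGroup.one_eq_mk]
      group
    by_cases hi : y.1 = a.1 ∧ y.2 = !a.2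
    · -- cancellation with the first letter of w : rotate left
      have ha : a = invL y := by
        obtain ⟨h1, h2⟩ := hi
        have h3 : a.2 = !y.2 := by rw [h2, Bool.not_not]
        cases a; cases y
        simp_all [invL]
      have hrot : (a :: t) ~r (t ++ [a]) := by
        refine ⟨1, ?_⟩
        rw [List.rotate_cons_succ, List.rotate_zero]
      refine ⟨[], t ++ [a], ?_, hrot, ?_⟩
      · refine { chain_p := List.isChain_nil
                 crw := ⟨?_, ?_⟩
                 wne := by simp
                 junL := by simp
                 junR := by simp }
        · refine List.isChain_append.2 ⟨S.crw.1.tail, List.isChain_singleton a, ?_⟩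
          intro x hx b hb
          have hb' : b = a := by simpa using hb.symm
          rw [hb']
          exact S.crw.2 x (mem_gl_cons a hx) a (by simp)
        · intro x hx b hb
          have hx' : x = a := by
            rw [List.getLast?_append_of_ne_nil _ (by simp : [a] ≠ [])] at hx
            simpa using hx.symm
          subst hx'
          cases t with
          | nil =>
            have : b = x := by simpa using hb.symm
            subst this
            rintro ⟨_, h2⟩
            simp at h2
          | cons c t2 =>
            have : b = c := by simpa using hb.symm
            subst this
            exact (List.isChain_cons_cons.1 S.crw.1).1
      · rw [base]
        have h1 : FreeGroup.mk [y] * FreeGroup.mk (a :: t) = FreeGroup.mk t := by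
          rw [FreeGroup.mul_mk, ha]
          have := mk_cancel ([] : List (α × Bool)) t y
          simpa using this
        rw [h1, inv_mk_singleton, FreeGroup.mul_mk, ← ha]
        rw [← FreeGroup.one_eq_mk]
        group
    · by_cases hii : (a :: t).getLast (List.cons_ne_nil a t) = y
      · -- cancellation with the last letter of w : rotate right
        have hsplit : a :: t = (a :: t).dropLast ++ [y] := by
          conv_lhs => rw [← List.dropLast_append_getLast (List.cons_ne_nil a t)]
          rw [hii]
        refine ⟨[], y :: (a :: t).dropLast, ?_, ?_, ?_⟩
        · refine { chain_p := List.isChain_nil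
                   crw := ⟨?_, ?_⟩
                   wne := by simp
                   junL := by simp
                   junR := by simp }
          · cases hd : (a :: t).dropLast with
            | nil => exact List.isChain_singleton _
            | cons b t' =>
              refine List.isChain_cons_cons.2 ⟨?_, hd ▸ S.crw.1.prefix (List.dropLast_prefix _)⟩
              have hb : b = a := by
                cases t with
                | nil => simp at hd
                | cons c t2 =>
                  rw [List.dropLast_cons₂] at hd
                  injection hd with h1 _
                  exact h1.symm
              subst hb
              exact hi
          · intro x hx b hb
            have hb' : b = y := by simpa using hb.symm
            subst hb'
            cases hd : (a :: t).dropLast with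
            | nil =>
              rw [hd] at hx
              have : x = b := by simpa using hx.symm
              subst this
              rintro ⟨_, h2⟩
              simp at h2
            | cons c t' =>
              rw [hd, List.getLast?_cons_cons] at hx
              have hch : List.Chain' Rl ((a :: t).dropLast ++ [b]) := hsplit ▸ S.crw.1
              have := (List.isChain_append.1 hch).2.2 x (by rw [hd]; exact hx) b (by simp)
              exact this
        · obtain ⟨u, hu⟩ : ∃ u, (a :: t).dropLast = u := ⟨_, rfl⟩
          rw [hu] at hsplit
          refine ⟨u.length, ?_⟩
          rw [hu]
          conv_lhs => rw [hsplit]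
          rw [List.rotate_eq_drop_append_take (by simp), List.drop_left, List.take_left]
          simp
        · rw [base, inv_mk_singleton]
          obtain ⟨u, hu⟩ : ∃ u, (a :: t).dropLast = u := ⟨_, rfl⟩
          rw [hu] at hsplit
          rw [hu, hsplit, FreeGroup.mul_mk, FreeGroup.mul_mk]
          have hlist : [y] ++ (u ++ [y]) ++ [invL y] = (y :: u) ++ (y :: invL y :: []) := by
            simp
          rw [hlist, mk_cancel]
          rw [← FreeGroup.one_eq_mk]
          simp
      · -- no cancellation at all
        refine ⟨[y], a :: t, ?_, IsRotated.refl _, by rw [base]⟩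
        refine { chain_p := List.isChain_singleton y
                 crw := S.crw
                 wne := S.wne
                 junL := ?_
                 junR := ?_ }
        · intro x hx b hb
          have hx' : x = y := by simpa using hx.symm
          have hb' : b = a := by simpa using hb.symm
          subst hx'; subst hb'
          exact hi
        · intro x hx z hz
          have hz' : z = y := by simpa using hz.symm
          subst hz'
          have hx' : x = (a :: t).getLast (List.cons_ne_nil a t) := by
            rw [List.getLast?_eq_getLast (List.cons_ne_nil a t)] at hx
            simpa using hx.symm
          apply rl_of_ne_pair
          intro hxy
          apply hii
          rw [← hx'] at *
          exact hxy

lemma conj_list (l : List (α × Bool)) {w : List (α × Bool)} (S : Shape [] w) :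
    ∃ p' w', Shape p' w' ∧ w ~r w' ∧
      FreeGroup.mk l * FreeGroup.mk w * (FreeGroup.mk l)⁻¹
        = FreeGroup.mk p' * FreeGroup.mk w' * (FreeGroup.mk p')⁻¹ := by
  induction l with
  | nil =>
    refine ⟨[], w, S, IsRotated.refl w, rfl⟩
  | cons y t ih =>
    obtain ⟨p1, w1, S1, hr1, he1⟩ := ih
    obtain ⟨p2, w2, S2, hr2, he2⟩ := conj_letter S1 y
    refine ⟨p2, w2, S2, hr1.trans hr2, ?_⟩
    have hsplit : FreeGroup.mk (y :: t) = FreeGroup.mk [y] * FreeGroup.mk t := by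
      rw [FreeGroup.mul_mk]; rfl
    rw [hsplit]
    calc FreeGroup.mk [y] * FreeGroup.mk t * FreeGroup.mk w *
          (FreeGroup.mk [y] * FreeGroup.mk t)⁻¹
        = FreeGroup.mk [y] * (FreeGroup.mk t * FreeGroup.mk w * (FreeGroup.mk t)⁻¹) *
          (FreeGroup.mk [y])⁻¹ := by group
      _ = FreeGroup.mk [y] * (FreeGroup.mk p1 * FreeGroup.mk w1 * (FreeGroup.mk p1)⁻¹) *
          (FreeGroup.mk [y])⁻¹ := by rw [he1]
      _ = FreeGroup.mk p2 * FreeGroup.mk w2 * (FreeGroup.mk p2)⁻¹ := he2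

lemma exists_conj_crw (g : FreeGroup α) :
    ∃ (u : FreeGroup α) (w : List (α × Bool)), CRW w ∧ g = u * FreeGroup.mk w * u⁻¹ := by
  suffices H : ∀ N (g : FreeGroup α), g.toWord.length = N →
      ∃ (u : FreeGroup α) (w : List (α × Bool)), CRW w ∧ g = u * FreeGroup.mk w * u⁻¹ from
    H _ g rfl
  intro N
  induction N using Nat.strong_induction_on with
  | _ N ih =>
    intro g hN
    by_cases hc : ∀ x ∈ g.toWord.getLast?, ∀ y ∈ g.toWord.head?, Rl x y
    · exact ⟨1, g.toWord, ⟨chain'_toWord g, hc⟩,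
        by rw [one_mul, inv_one, mul_one, FreeGroup.mk_toWord]⟩
    · push_neg at hc
      obtain ⟨x, hx, y, hy, hxy⟩ := hc
      have hxy' : x.1 = y.1 ∧ x.2 = !y.2 := by
        by_contra hcon
        exact hxy hcon
      cases hw : g.toWord with
      | nil => rw [hw] at hy; simp at hy
      | cons a t =>
        rw [hw] at hy hx
        have hya : y = a := by simpa using hy.symm
        subst hya
        have hxl : x = (y :: t).getLast (List.cons_ne_nil y t) := by
          rw [List.getLast?_eq_getLast (List.cons_ne_nil y t)] at hx
          simpa using hx.symm
        cases t with
        | nil =>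
          simp at hxl
          subst hxl
          obtain ⟨-, h2⟩ := hxy'
          simp at h2
        | cons b t2 =>
          have htne : (b :: t2) ≠ [] := List.cons_ne_nil b t2
          have hgl : (y :: b :: t2).getLast (List.cons_ne_nil _ _)
              = (b :: t2).getLast htne := List.getLast_cons htne
          have hxinv : x = invL y := by
            cases x; cases y
            simp [invL] at hxy' ⊢
            exact ⟨hxy'.1, hxy'.2⟩
          set t' := (b :: t2).dropLast with ht'
          have hsplit : (b :: t2) = t' ++ [invL y] := by
            conv_lhs => rw [← List.dropLast_append_getLast htne]
            rw [← hgl, ← hxl, hxinv]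
          -- g = mk [y] * mk t' * (mk [y])⁻¹
          have hg : g = FreeGroup.mk [y] * FreeGroup.mk t' * (FreeGroup.mk [y])⁻¹ := by
            rw [inv_mk_singleton, FreeGroup.mul_mk, FreeGroup.mul_mk,
              ← FreeGroup.mk_toWord (x := g), hw]
            congr 1
            rw [hsplit]
            simp
          have hchain : List.Chain' Rl t' := by
            have h1 : List.Chain' Rl (y :: b :: t2) := hw ▸ chain'_toWord g
            exact h1.tail.prefix (List.dropLast_prefix _)
          have htoW : (FreeGroup.mk t').toWord = t' := by
            rw [FreeGroup.toWord_mk, reduce_eq_self_of_chain' hchain]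
          have hlen : (FreeGroup.mk t').toWord.length < N := by
            rw [htoW]
            have : t'.length = (b :: t2).length - 1 := by
              rw [ht', List.length_dropLast]
            have hN' : N = t2.length + 2 := by
              rw [← hN, hw]; simp
            simp only [this]
            simp
            omega
          obtain ⟨u', w', hcrw, hEq⟩ := ih _ hlen (FreeGroup.mk t') rfl
          refine ⟨FreeGroup.mk [y] * u', w', hcrw, ?_⟩
          rw [hg, hEq]
          group

def aL : Fin 2 × Bool := ((0 : Fin 2), true)
def bL : Fin 2 × Bool := ((1 : Fin 2), true)

def W : ℕ → List (Fin 2 × Bool)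
  | 0 => []
  | n + 1 => W n ++ (List.replicate (n + 1) aL ++ [bL])

lemma flat_rep_single (m : ℕ) (a : β) :
    (List.replicate m [a]).flatten = List.replicate m a := by
  induction m with
  | zero => rfl
  | succ m ih => rw [List.replicate_succ, List.replicate_succ, List.flatten_cons, ih]; rfl

lemma of_pow (x : Fin 2) (m : ℕ) :
    (FreeGroup.of x) ^ m = FreeGroup.mk (List.replicate m (x, true)) := by
  rw [FreeGroup.of, FreeGroup.pow_mk, flat_rep_single]

lemma gword_eq_mk (n : ℕ) : gword n = FreeGroup.mk (W n) := by
  induction n with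
  | zero => rw [gword]; simp [W, FreeGroup.one_eq_mk]
  | succ n ih =>
    rw [gword, List.range_succ, List.map_append, List.prod_append, ← gword, ih]
    simp only [List.map_cons, List.map_nil, List.prod_cons, List.prod_nil, mul_one]
    rw [of_pow, FreeGroup.of, FreeGroup.mul_mk, FreeGroup.mul_mk]
    rfl

lemma W_true {n : ℕ} : ∀ x ∈ W n, x.2 = true := by
  induction n with
  | zero => simp [W]
  | succ n ih =>
    intro x hx
    rw [W, List.mem_append] at hx
    rcases hx with h | h
    · exact ih x h
    · rw [List.mem_append] at h
      rcases h with h | h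
      · rw [List.eq_of_mem_replicate h]; rfl
      · simp at h; rw [h]; rfl

lemma chain'_of_true {w : List (α × Bool)} (h : ∀ x ∈ w, x.2 = true) :
    List.Chain' Rl w := by
  induction w with
  | nil => exact List.isChain_nil
  | cons a t ih =>
    refine List.isChain_cons.2 ⟨?_, ih fun x hx => h x (List.mem_cons_of_mem a hx)⟩
    intro y hy
    rintro ⟨-, h2⟩
    have ha : a.2 = true := h a (List.mem_cons_self)
    have hyt : y.2 = true := h y (List.mem_cons_of_mem a (List.mem_of_mem_head? hy))
    rw [ha, hyt] at h2
    simp at h2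

lemma head?_W {n : ℕ} (hn : 1 ≤ n) : (W n).head? = some aL := by
  induction n with
  | zero => omega
  | succ n ih =>
    cases n with
    | zero => rfl
    | succ k =>
      rw [W, List.head?_append_of_ne_nil]
      · exact ih (by omega)
      · intro h
        have := ih (by omega)
        rw [h] at this
        simp at this

lemma getLast?_W {n : ℕ} (hn : 1 ≤ n) : (W n).getLast? = some bL := by
  cases n with
  | zero => omega
  | succ k =>
    rw [W, List.getLast?_append_of_ne_nil _ (by simp),
      List.getLast?_append_of_ne_nil _ (by simp)]
    rfl

lemma W_ne_nil {n : ℕ} (hn : 1 ≤ n) : W n ≠ [] := by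
  intro h
  have := getLast?_W hn
  rw [h] at this
  simp at this

lemma length_W_succ (n : ℕ) : (W (n + 1)).length = (W n).length + (n + 2) := by
  rw [W]; simp

lemma length_W_le {c n : ℕ} (h : c ≤ n) : (W c).length ≤ (W n).length := by
  induction n with
  | zero => rw [Nat.le_zero.1 h]
  | succ n ih =>
    rcases Nat.lt_or_ge c (n + 1) with h' | h'
    · have := ih (by omega)
      rw [length_W_succ]
      omega
    · have : c = n + 1 := by omega
      rw [this]

lemma W_prefix {c n : ℕ} (h : c < n) :
    ∃ R, W n = W c ++ (List.replicate (c + 1) aL ++ ([bL] ++ R)) := by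
  induction n with
  | zero => omega
  | succ n ih =>
    rcases Nat.lt_or_ge c n with h' | h'
    · obtain ⟨R, hR⟩ := ih h'
      refine ⟨R ++ (List.replicate (n + 1) aL ++ [bL]), ?_⟩
      rw [W, hR]
      simp [List.append_assoc]
    · have hcn : c = n := by omega
      subst hcn
      exact ⟨[], by rw [W]; simp⟩

lemma W_head_pair {c : ℕ} (hc : 1 ≤ c) : ∃ t, W c = aL :: bL :: t := by
  rcases Nat.eq_or_lt_of_le hc with h | h
  · exact ⟨[], by rw [← h]; rfl⟩
  · obtain ⟨R, hR⟩ := W_prefix (show 0 < c by omega)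
    exact ⟨R, by rw [hR]; rfl⟩

lemma prefix_b {n : ℕ} : ∀ P S : List (Fin 2 × Bool), W n = P ++ S →
    P.getLast? = some bL → ∃ c, 1 ≤ c ∧ c ≤ n ∧ P = W c := by
  induction n with
  | zero =>
    intro P S h hP
    rw [W] at h
    have : P = [] := by
      have := congrArg List.length h
      simp at this
      exact List.length_eq_zero_iff.1 (by omega)
    rw [this] at hP
    simp at hP
  | succ n ih =>
    intro P S h hP
    have hPpre : P <+: W (n + 1) := ⟨S, h.symm⟩
    rcases le_or_gt P.length (W n).length with hle | hlt
    · have hPn : P <+: W n := by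
        refine List.prefix_of_prefix_length_le hPpre ?_ hle
        rw [W]
        exact ⟨_, rfl⟩
      obtain ⟨S', hS'⟩ := hPn
      obtain ⟨c, h1, h2, h3⟩ := ih P S' hS'.symm hP
      exact ⟨c, h1, by omega, h3⟩
    · have hWn : W n <+: P := by
        refine List.prefix_of_prefix_length_le ?_ hPpre (by omega)
        rw [W]
        exact ⟨_, rfl⟩
      obtain ⟨Q, hQ⟩ := hWn
      have hQne : Q ≠ [] := by
        intro hq
        rw [hq, List.append_nil] at hQ
        rw [← hQ] at hlt
        omega
      have hQpre : Q <+: (List.replicate (n + 1) aL ++ [bL]) := by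
        rw [W, ← hQ, List.append_assoc] at h
        have := List.append_cancel_left h
        exact ⟨S, this.symm⟩
      have hQlast : Q.getLast? = some bL := by
        rw [← hQ, List.getLast?_append_of_ne_nil _ hQne] at hP
        exact hP
      have hQlen : Q.length = n + 2 := by
        rcases le_or_gt Q.length (n + 1) with hq | hq
        · exfalso
          have hQrep : Q <+: List.replicate (n + 1) aL := by
            refine List.prefix_of_prefix_length_le hQpre ?_ (by simpa using hq)
            exact ⟨_, rfl⟩
          have hbmem : bL ∈ Q := List.mem_of_mem_getLast? hQlast
          have : bL = aL := List.eq_of_mem_replicate (hQrep.subset hbmem)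
          simp [aL, bL] at this
        · have := hQpre.length_le
          simp at this
          omega
      have hQeq : Q = List.replicate (n + 1) aL ++ [bL] :=
        hQpre.eq_of_length (by simpa using hQlen)
      refine ⟨n + 1, by omega, le_refl _, ?_⟩
      rw [← hQ, hQeq, W]

lemma W_not_wpow {n m : ℕ} (hn : 1 ≤ n) (hm : 2 ≤ m) {w : List (Fin 2 × Bool)}
    (hw : w ≠ []) : W n ≠ wpow m w := by
  intro hEq
  obtain ⟨k, rfl⟩ : ∃ k, m = k + 2 := ⟨m - 2, by omega⟩
  have hsplit : W n = w ++ (w ++ wpow k w) := by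
    rw [hEq, wpow_succ, wpow_succ]
  have hwlast : w.getLast? = some bL := by
    have := getLast?_W hn
    rw [hEq, getLast?_wpow (by omega)] at this
    exact this
  obtain ⟨c, hc1, hc2, rfl⟩ := prefix_b w (w ++ wpow k w) hsplit hwlast
  -- length forces c < n
  have hlenW : (W n).length = (k + 2) * (W c).length := by
    rw [hEq, length_wpow]
  have hWc : 1 ≤ (W c).length := by
    have := W_ne_nil hc1
    cases h : W c with
    | nil => exact absurd h this
    | cons a t => simp [h]
  have hcn : c < n := by
    rcases Nat.lt_or_ge c n with h | h
    · exact h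
    · exfalso
      have hceq : c = n := by omega
      subst hceq
      nlinarith
  obtain ⟨R, hR⟩ := W_prefix hcn
  rw [hR] at hsplit
  have hmid := List.append_cancel_left hsplit
  -- hmid : replicate (c+1) aL ++ ([bL] ++ R) = W c ++ wpow k (W c)
  obtain ⟨t, ht⟩ := W_head_pair hc1
  obtain ⟨c', rfl⟩ : ∃ c', c = c' + 1 := ⟨c - 1, by omega⟩
  rw [List.replicate_succ, List.replicate_succ, ht] at hmid
  simp only [List.cons_append] at hmid
  have := (List.cons.injEq _ _ _ _).mp hmid.symm
  have h2 := (List.cons.injEq _ _ _ _).mp this.2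
  have : bL = aL := h2.1
  simp [aL, bL] at this

lemma toWord_gword (n : ℕ) : (gword n).toWord = W n := by
  rw [gword_eq_mk, FreeGroup.toWord_mk, reduce_eq_self_of_chain' (chain'_of_true W_true)]

lemma cyc_red_gword {n : ℕ} (hn : 1 ≤ n) : CyclicallyReduced (gword n) := by
  intro x hx
  rw [toWord_gword] at hx ⊢
  rw [head?_W hn] at hx
  have hxa : x = aL := by simpa using hx.symm
  subst hxa
  rw [getLast?_W hn]
  simp only [aL, bL]
  intro hcon
  have := (Option.some.injEq _ _).mp hcon
  simp at this

lemma conj_pow_nat {G : Type*} [Group G] (a b : G) (m : ℕ) :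
    (a * b * a⁻¹) ^ m = a * b ^ m * a⁻¹ := by
  induction m with
  | zero => simp
  | succ m ih => rw [pow_succ, pow_succ, ih]; group


end Aux

/-- For `n ≥ 1`, the element `g_n = a¹ b a² b ⋯ aⁿ b` of the free group `F(a,b)` is
cyclically reduced and is not a proper power: `g_n = hᵐ` with `m ≥ 1` forces `m = 1`. -/
theorem stmt_15 (n : ℕ) (hn : 1 ≤ n) :
    CyclicallyReduced (gword n) ∧
    ∀ (h : FreeGroup (Fin 2)) (m : ℕ), 1 ≤ m → gword n = h ^ m → m = 1 := by
  have hcyc := cyc_red_gword hn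
  refine ⟨hcyc, ?_⟩
  intro h m hm hEq
  by_contra hne
  have hm2 : 2 ≤ m := by omega
  obtain ⟨u, w, hcrw, rfl⟩ := exists_conj_crw h
  have hWn_ne : W n ≠ [] := W_ne_nil hn
  have hw_ne : w ≠ [] := by
    rintro rfl
    rw [← FreeGroup.one_eq_mk] at hEq
    have h1 : gword n = 1 := by rw [hEq]; group
    have h2 := congrArg FreeGroup.toWord h1
    rw [toWord_gword, FreeGroup.toWord_one] at h2
    exact hWn_ne h2
  rw [conj_pow_nat] at hEq
  have hpowmk : (FreeGroup.mk w) ^ m = FreeGroup.mk (wpow m w) := FreeGroup.pow_mk m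
  rw [hpowmk] at hEq
  have hShape : Shape ([] : List (Fin 2 × Bool)) (wpow m w) :=
    { chain_p := List.isChain_nil
      crw := crw_wpow hcrw m
      wne := wpow_ne_nil (by omega) hw_ne
      junL := by simp
      junR := by simp }
  obtain ⟨p', w', S', hrot, heq2⟩ := conj_list u.toWord hShape
  rw [FreeGroup.mk_toWord] at heq2
  have hEq2 : gword n = FreeGroup.mk p' * FreeGroup.mk w' * (FreeGroup.mk p')⁻¹ :=
    hEq.trans heq2
  have htW : (gword n).toWord = p' ++ (w' ++ FreeGroup.invRev p') := by
    rw [hEq2, FreeGroup.inv_mk, FreeGroup.mul_mk, FreeGroup.mul_mk, FreeGroup.toWord_mk,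
      List.append_assoc, reduce_sandwich S']
  cases hp : p' with
  | cons hd tl =>
    rw [hp] at htW
    have hhead : (gword n).toWord.head? = some hd := by rw [htW]; rfl
    have hlast : (gword n).toWord.getLast? = some (invL hd) := by
      rw [htW, List.getLast?_append_of_ne_nil _ ?hne1,
        List.getLast?_append_of_ne_nil _ ?hne2, getLast?_invRev]
      case hne1 =>
        intro hcon
        have := congrArg List.length hcon
        rw [List.length_append, FreeGroup.invRev_length] at this
        simp at this
      case hne2 =>
        intro hcon
        have := congrArg List.length hcon
        rw [FreeGroup.invRev_length] at this
        simp at this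
      rfl
    exact hcyc hd hhead (by rw [hlast]; rfl)
  | nil =>
    rw [hp] at htW
    rw [toWord_gword] at htW
    have hinv : FreeGroup.invRev ([] : List (Fin 2 × Bool)) = [] := FreeGroup.invRev_empty
    rw [hinv, List.nil_append, List.append_nil] at htW
    obtain ⟨k, hk⟩ := hrot
    rw [rotate_wpow] at hk
    refine W_not_wpow hn hm2 (w := w.rotate k) ?_ ?_
    · intro hcon
      have := congrArg List.length hcon
      rw [List.length_rotate] at this
      exact hw_ne (List.length_eq_zero_iff.mp this)
    · rw [htW, ← hk]
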